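/- arXiv:0906.0180 — 4 statements merged into one kernel-verified Lean document; each statement's English description precedes it below -/
import Mathlib

section
/- Let η* be non-decreasing on (0,π] with η*(x) → 0 as x → 0, let |η| ≤ η*, let L(x) = exp(-∫_x^π η(s)/s ds), and let f(x) = x^{-α} L(x) with α ∈ [-1+δ, 1-δ] for some δ ∈ (0,1). Then ∫_0^π f(x) dx ≤ C, where C depends only on η* and δ (uniformly in α and η). -/
open Real MeasureTheory Filter Set

open scoped Topology

/-!
Since `η* → 0` at `0` and `η*` is monotone, `η* s ≤ δ/2 + K s` on `(0, π]` for some `K`. Hence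
`-∫_x^π η(s)/s ds ≤ (δ/2) log (π/x) + Kπ`, i.e. `L(x) ≤ e^{Kπ} π^{δ/2} x^{-δ/2}`, and the integrand
is dominated by a constant times `x^{δ/2-1}`, which is integrable on `(0, π]` whatever `α` and `η`.
-/

theorem exists_le_add_mul_of_monotoneOn_of_tendsto {g : ℝ → ℝ} {b ε : ℝ}
    (hg : MonotoneOn g (Ioc 0 b)) (hlim : Tendsto g (𝓝[>] 0) (𝓝 0)) (hε : 0 < ε) :
    ∃ K, 0 ≤ K ∧ ∀ s ∈ Ioc 0 b, g s ≤ ε + K * s := by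
  obtain ⟨u, hu : 0 < u, hsmall⟩ :=
    mem_nhdsGT_iff_exists_Ioo_subset.mp (hlim.eventually (gt_mem_nhds hε))
  set M := max (g b) 0
  have hM : 0 ≤ M := le_max_right _ _
  refine ⟨M / u, div_nonneg hM hu.le, fun s hs => ?_⟩
  rcases lt_or_ge s u with hsu | hus
  · have : g s < ε := hsmall ⟨hs.1, hsu⟩
    have : 0 ≤ M / u * s := mul_nonneg (div_nonneg hM hu.le) hs.1.le
    linarith
  · have hgM : g s ≤ M := (hg hs (right_mem_Ioc.mpr (hs.1.trans_le hs.2)) hs.2).trans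
      (le_max_left _ _)
    have : M ≤ M / u * s := by
      rw [div_mul_eq_mul_div, le_div_iff₀ hu]
      exact mul_le_mul_of_nonneg_left hus hM
    linarith

theorem exp_neg_integral_div_le {η : ℝ → ℝ} {b ε K x : ℝ} (hη : Measurable η)
    (hbound : ∀ s ∈ Ioc 0 b, |η s| ≤ ε + K * s) (hK : 0 ≤ K) (hx : 0 < x) (hxb : x ≤ b) :
    exp (-∫ s in x..b, η s / s) ≤ exp (K * b) * b ^ ε * x ^ (-ε) := by
  have hpos : ∀ s ∈ Icc x b, 0 < s := fun s hs => hx.trans_le hs.1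
  have hinv_int : IntervalIntegrable (fun s => ε * s⁻¹) volume x b :=
    (continuousOn_const.mul (continuousOn_inv₀.mono fun s hs =>
      (hpos s (uIcc_of_le hxb ▸ hs)).ne')).intervalIntegrable
  have hmajorant_int : IntervalIntegrable (fun s => ε * s⁻¹ + K) volume x b :=
    hinv_int.add intervalIntegrable_const
  have hdiv_le : ∀ s ∈ Icc x b, |η s / s| ≤ ε * s⁻¹ + K := fun s hs => by
    have hs0 := hpos s hs
    rw [abs_div, abs_of_pos hs0, div_le_iff₀ hs0, add_mul, inv_mul_cancel_right₀ hs0.ne']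
    exact hbound s ⟨hs0, hs.2⟩
  have hneg_int : IntervalIntegrable (fun s => -(η s / s)) volume x b := by
    refine (intervalIntegrable_iff_integrableOn_Icc_of_le hxb).mpr ?_
    refine Integrable.mono' ((intervalIntegrable_iff_integrableOn_Icc_of_le hxb).mp
      hmajorant_int) (hη.div measurable_id).neg.aestronglyMeasurable ?_
    filter_upwards [ae_restrict_mem measurableSet_Icc] with s hs
    rw [norm_neg, norm_eq_abs]
    exact hdiv_le s hs
  have hintegral : -∫ s in x..b, η s / s ≤ ε * (log b - log x) + K * b := calc
    -∫ s in x..b, η s / s = ∫ s in x..b, -(η s / s) := intervalIntegral.integral_neg.symm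
    _ ≤ ∫ s in x..b, (ε * s⁻¹ + K) := intervalIntegral.integral_mono_on hxb hneg_int
        hmajorant_int fun s hs => (neg_le_abs _).trans (hdiv_le s hs)
    _ = ε * (log b - log x) + K * (b - x) := by
        rw [intervalIntegral.integral_add hinv_int intervalIntegrable_const,
          intervalIntegral.integral_const_mul, integral_inv_of_pos hx (hx.trans_le hxb),
          intervalIntegral.integral_const, smul_eq_mul, log_div (hx.trans_le hxb).ne' hx.ne']
        ring
    _ ≤ ε * (log b - log x) + K * b := by gcongr; linarith
  rw [rpow_def_of_pos (hx.trans_le hxb), rpow_def_of_pos hx, ← exp_add, ← exp_add]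
  exact exp_le_exp.mpr (by linarith)

theorem rpow_le_rpow_mul_rpow_of_le {x c a a' k : ℝ} (hx : 0 < x) (hxc : x ≤ c) (hc : 1 ≤ c)
    (ha : a' ≤ a) (hk : a - a' ≤ k) : x ^ a ≤ c ^ k * x ^ a' := calc
  x ^ a = x ^ (a - a') * x ^ a' := by rw [← rpow_add hx, sub_add_cancel]
  _ ≤ c ^ (a - a') * x ^ a' := by gcongr
  _ ≤ c ^ k * x ^ a' := by gcongr

theorem integral_spectral_density_uniformly_bounded
    (ηs : ℝ → ℝ) (δ : ℝ) (hδ : δ ∈ Ioo (0:ℝ) 1)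
    (hmono : MonotoneOn ηs (Ioc 0 π))
    (hlim : Tendsto ηs (nhdsWithin 0 (Ioi 0)) (nhds 0)) :
    ∃ C : ℝ,
      ∀ η : ℝ → ℝ, Measurable η → (∀ s ∈ Ioc (0:ℝ) π, |η s| ≤ ηs s) →
        ∀ α ∈ Icc (-1 + δ) (1 - δ),
          ∫ x in Ioc (0:ℝ) π, x ^ (-α) * Real.exp (-∫ s in x..π, η s / s) ≤ C := by
  obtain ⟨K, hK, hηs⟩ := exists_le_add_mul_of_monotoneOn_of_tendsto hmono hlim (half_pos hδ.1)
  set c := exp (K * π) * π ^ (δ / 2) * π ^ (2 : ℝ)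
  refine ⟨∫ x in Ioc 0 π, c * x ^ (δ / 2 - 1), fun η hη hηb α hα => ?_⟩
  have hdom_int : IntegrableOn (fun x : ℝ => c * x ^ (δ / 2 - 1)) (Ioc 0 π) :=
    (intervalIntegral.intervalIntegrable_rpow' (by linarith [hδ.1])).1.const_mul c
  refine integral_mono_of_nonneg ?_ hdom_int ?_ <;>
    filter_upwards [ae_restrict_mem measurableSet_Ioc] with x ⟨hx, hxπ⟩
  · positivity
  calc x ^ (-α) * exp (-∫ s in x..π, η s / s)
      ≤ x ^ (-α) * (exp (K * π) * π ^ (δ / 2) * x ^ (-(δ / 2))) := by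
        gcongr
        exact exp_neg_integral_div_le hη (fun s hs => (hηb s hs).trans (hηs s hs)) hK hx hxπ
    _ = exp (K * π) * π ^ (δ / 2) * x ^ (-α - δ / 2) := by
        rw [sub_eq_add_neg, rpow_add hx]; ring
    _ ≤ exp (K * π) * π ^ (δ / 2) * (π ^ (2 : ℝ) * x ^ (δ / 2 - 1)) := by
        gcongr
        exact rpow_le_rpow_mul_rpow_of_le hx hxπ (by linarith [pi_gt_three])
          (by linarith [hα.2]) (by linarith [hα.1, hδ.1])
    _ = c * x ^ (δ / 2 - 1) := by ring
end

section
/- Let ν_{m,k} = log(k) - (1/m) Σ_{j=1}^m log(j) for 1 ≤ k ≤ m, and s_m² = Σ_{k=1}^m ν_{m,k}². Then Σ_{k=1}^m ν_{m,k} = 0 and s_m² = m(1 + o(1)) as m → ∞. -/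
/-!
Expanding the square, `s_m² = Σ log² k - (Σ log k)² / m`.
Comparing both sums with integrals of the monotone functions `log` and `log²` gives
`Σ log k = m log m - m + O(log m)` and `Σ log² k = m log² m - 2m log m + 2m + O(log² m)`;
substituting, `s_m² / m = (log² m - 2 log m + 2) - (log m - 1)² + O((log m + 1)² / m) → 1`.
-/

open Real Filter Topology
open scoped Finset

namespace Finset

variable {ι K : Type*} [Field K] (s : Finset ι) (f : ι → K)

theorem sum_sub_sum_div_card (hs : (#s : K) ≠ 0) :
    ∑ i ∈ s, (f i - (∑ j ∈ s, f j) / #s) = 0 := by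
  rw [sum_sub_distrib, sum_const, nsmul_eq_mul, mul_div_cancel₀ _ hs, sub_self]

theorem sum_sub_sum_div_card_sq :
    ∑ i ∈ s, (f i - (∑ j ∈ s, f j) / #s) ^ 2 =
      ∑ i ∈ s, f i ^ 2 - (∑ i ∈ s, f i) ^ 2 / #s := by
  rcases eq_or_ne (#s : K) 0 with hs | hs
  · simp [hs]
  simp only [sub_sq, sum_add_distrib, sum_sub_distrib, sum_const, nsmul_eq_mul, ← sum_mul,
    ← mul_sum]
  field_simp
  ring

end Finset

theorem MonotoneOn.sum_Icc_sub_integral_mem {f : ℝ → ℝ} {a b : ℕ} (hab : a ≤ b)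
    (hf : MonotoneOn f (Set.Icc a b)) :
    f a ≤ ∑ k ∈ Finset.Icc a b, f k - ∫ x in a..b, f x ∧
      ∑ k ∈ Finset.Icc a b, f k - ∫ x in a..b, f x ≤ f b := by
  have htop : ∑ k ∈ Finset.Icc a b, f k = ∑ k ∈ Finset.Ico a b, f k + f b := by
    rw [← Finset.Ico_add_one_right_eq_Icc, Finset.sum_Ico_succ_top hab]
  have hbot : ∑ k ∈ Finset.Icc a b, f k = f a + ∑ k ∈ Finset.Ico a b, f ↑(k + 1) := by
    rw [← Finset.Ico_add_one_right_eq_Icc, Finset.sum_eq_sum_Ico_succ_bot (by omega),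
      ← Finset.sum_Ico_add' (fun k : ℕ => f k)]
  constructor
  · linarith [hf.integral_le_sum_Ico hab]
  · linarith [hf.sum_le_integral_Ico hab]

theorem integral_log_sq {a b : ℝ} (ha : 0 < a) (hb : 0 < b) :
    ∫ x in a..b, log x ^ 2 =
      (b * log b ^ 2 - 2 * b * log b + 2 * b) - (a * log a ^ 2 - 2 * a * log a + 2 * a) := by
  have hpos : ∀ x ∈ Set.uIcc a b, x ≠ 0 := fun x hx =>
    (lt_of_lt_of_le (lt_min ha hb) hx.1).ne'
  refine intervalIntegral.integral_eq_sub_of_hasDerivAt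
    (f := fun x => x * log x ^ 2 - 2 * x * log x + 2 * x) (fun x hx => ?_)
    ((continuousOn_log.mono hpos).pow 2).intervalIntegrable
  have hlog := hasDerivAt_log (hpos x hx)
  convert (((hasDerivAt_id x).mul (hlog.pow 2)).sub
    (((hasDerivAt_id x).mul hlog).const_mul 2)).add ((hasDerivAt_id x).const_mul 2) using 1
  · ext y; simp only [Pi.add_apply, Pi.sub_apply, Pi.mul_apply, Pi.pow_apply, id]; ring
  · simp only [Pi.pow_apply, id]; field_simp [hpos x hx]; ring

theorem abs_sum_log_sub_le {m : ℕ} (hm : 1 ≤ m) :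
    |∑ k ∈ Finset.Icc 1 m, log k - (m * log m - m)| ≤ log m + 1 := by
  have hmono : MonotoneOn log (Set.Icc ((1 : ℕ) : ℝ) m) := fun x hx _ _ hxy =>
    log_le_log (by simp at hx; linarith [hx.1]) hxy
  obtain ⟨hlow, hhigh⟩ := hmono.sum_Icc_sub_integral_mem hm
  simp only [Nat.cast_one, log_one, integral_log, mul_zero] at hlow hhigh
  rw [abs_le]; constructor <;> linarith [log_nonneg (Nat.one_le_cast.2 hm : (1 : ℝ) ≤ m)]

theorem abs_sum_log_sq_sub_le {m : ℕ} (hm : 1 ≤ m) :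
    |∑ k ∈ Finset.Icc 1 m, log k ^ 2 - (m * log m ^ 2 - 2 * m * log m + 2 * m)| ≤
      log m ^ 2 + 2 := by
  have hm' : (1 : ℝ) ≤ m := Nat.one_le_cast.2 hm
  have hmono : MonotoneOn (fun x => log x ^ 2) (Set.Icc ((1 : ℕ) : ℝ) m) :=
    fun x hx _ _ hxy => by
      simp only [Nat.cast_one, Set.mem_Icc] at hx
      exact pow_le_pow_left₀ (log_nonneg hx.1) (log_le_log (by linarith) hxy) 2
  obtain ⟨hlow, hhigh⟩ := hmono.sum_Icc_sub_integral_mem hm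
  simp only [Nat.cast_one, log_one, integral_log_sq one_pos (by linarith : (0 : ℝ) < m)]
    at hlow hhigh
  rw [abs_le]; constructor <;> nlinarith [sq_nonneg (log m)]

theorem tendsto_log_add_one_sq_div_natCast :
    Tendsto (fun m : ℕ => (log m + 1) ^ 2 / m) atTop (𝓝 0) := by
  have h : ∀ n, Tendsto (fun x : ℝ => log x ^ n / x) atTop (𝓝 0) := fun n => by
    simpa using tendsto_pow_log_div_mul_add_atTop 1 0 n one_ne_zero
  have := ((h 2).add ((h 1).const_mul 2)).add (h 0)
  simp only [mul_zero, add_zero] at this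
  refine (this.comp tendsto_natCast_atTop_atTop).congr fun m => ?_
  simp only [Function.comp_apply]; ring

theorem tendsto_mean_log_sq_sub_sq_mean_log :
    Tendsto (fun m : ℕ => (∑ k ∈ Finset.Icc 1 m, log k ^ 2) / m -
      ((∑ k ∈ Finset.Icc 1 m, log k) / m) ^ 2) atTop (𝓝 1) := by
  set A : ℕ → ℝ := fun m =>
    ∑ k ∈ Finset.Icc 1 m, log k ^ 2 - (m * log m ^ 2 - 2 * m * log m + 2 * m)
  set B : ℕ → ℝ := fun m => ∑ k ∈ Finset.Icc 1 m, log k - (m * log m - m)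
  have hg := tendsto_log_add_one_sq_div_natCast
  have hA : Tendsto (fun m : ℕ => A m / m) atTop (𝓝 0) := by
    refine squeeze_zero_norm' ?_ (by simpa using hg.const_mul 2)
    filter_upwards [eventually_ge_atTop 1] with m hm
    have hL := log_nonneg (Nat.one_le_cast.2 hm : (1 : ℝ) ≤ m)
    rw [norm_div, Real.norm_eq_abs, Real.norm_natCast, mul_div_assoc']
    gcongr
    nlinarith [abs_sum_log_sq_sub_le hm]
  have hB : Tendsto (fun m : ℕ => B m / m) atTop (𝓝 0) := by
    refine squeeze_zero_norm' ?_ hg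
    filter_upwards [eventually_ge_atTop 1] with m hm
    have hL := log_nonneg (Nat.one_le_cast.2 hm : (1 : ℝ) ≤ m)
    rw [norm_div, Real.norm_eq_abs, Real.norm_natCast]
    gcongr
    nlinarith [abs_sum_log_sub_le hm]
  have hLB : Tendsto (fun m : ℕ => (log m - 1) * (B m / m)) atTop (𝓝 0) := by
    refine squeeze_zero_norm' ?_ hg
    filter_upwards [eventually_ge_atTop 1] with m hm
    have hL := log_nonneg (Nat.one_le_cast.2 hm : (1 : ℝ) ≤ m)
    rw [norm_mul, norm_div, Real.norm_eq_abs, Real.norm_eq_abs, Real.norm_natCast, sq,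
      mul_div_assoc]
    gcongr
    · rw [abs_le]; constructor <;> linarith
    · exact abs_sum_log_sub_le hm
  have := ((hA.sub (hLB.const_mul 2)).sub (hB.pow 2)).const_add 1
  simp only [mul_zero, sub_zero, ne_eq, OfNat.ofNat_ne_zero, not_false_eq_true, zero_pow,
    add_zero] at this
  refine this.congr' ?_
  filter_upwards [eventually_ge_atTop 1] with m hm
  have : (m : ℝ) ≠ 0 := by positivity
  simp only [A, B]
  field_simp
  ring

theorem gph_regressors_centered_and_sum_of_squares
    (ν : ℕ → ℕ → ℝ)
    (hν : ∀ m k, ν m k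
      = Real.log k - (1 / (m : ℝ)) * ∑ j ∈ Finset.Icc 1 m, Real.log j) :
    (∀ m : ℕ, 1 ≤ m → ∑ k ∈ Finset.Icc 1 m, ν m k = 0) ∧
    Tendsto (fun m : ℕ => (∑ k ∈ Finset.Icc 1 m, ν m k ^ 2) / (m : ℝ))
      atTop (nhds 1) := by
  have hcard : ∀ m : ℕ, (#(Finset.Icc 1 m) : ℝ) = m := by simp
  have hν' : ∀ m k,
      ν m k = log k - (∑ j ∈ Finset.Icc 1 m, log j) / #(Finset.Icc 1 m) := by
    intro m k; rw [hν, hcard]; ring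
  simp only [hν']
  refine ⟨fun m hm => Finset.sum_sub_sum_div_card _ _ ?_, ?_⟩
  · rw [hcard]; positivity
  · refine tendsto_mean_log_sq_sub_sq_mean_log.congr fun m => ?_
    rw [Finset.sum_sub_sum_div_card_sq, hcard]; ring
end

section
/- Let η* be non-decreasing on (0,π] with η*(x) → 0 as x → 0, let η be measurable with |η| ≤ η*, and define h(x) = -∫_x^π η(s)/s ds. Let x_k = 2πk/n and 1 ≤ m ≤ n/4. Then |Σ_{k=1}^m h(x_k) - (n/2π) ∫_0^{x_m} h(s) ds| ≤ η*(x_m) (Σ_{k=1}^m log(k) - m log(m) + m), which is O(η*(x_m) log(m)). -/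
open Real MeasureTheory Set

/-!
Since `h' = η / s` and `|η| ≤ η*(x_m)` on `(0, x_m]`, the function `h` is `η*(x_m)`-Lipschitz
there for the distance `|log t - log s|`. That distance is invariant under the dilation
`s ↦ (2π/n) s`, so it suffices to treat the unit step: on `[k, k+1]` the error
`|h (k+1) - ∫ h|` is at most `η*(x_m) ∫_k^{k+1} log ((k+1)/s) ds`, and these integrals add up
to `∑ log k - m log m + m`.
-/

def LogLipschitzOn (M : ℝ) (g : ℝ → ℝ) (s : Set ℝ) : Prop :=
  ∀ x ∈ s, ∀ y ∈ s, |g x - g y| ≤ M * |log x - log y|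

namespace LogLipschitzOn

variable {M a b δ : ℝ} {g : ℝ → ℝ} {s : Set ℝ}

theorem mono {t : Set ℝ} (hg : LogLipschitzOn M g s) (hts : t ⊆ s) : LogLipschitzOn M g t :=
  fun x hx y hy => hg x (hts hx) y (hts hy)

theorem continuousOn (hg : LogLipschitzOn M g s) (hs : s ⊆ Ioi 0) : ContinuousOn g s := by
  intro x hx
  rw [ContinuousWithinAt, tendsto_iff_norm_sub_tendsto_zero]
  have hlog : Filter.Tendsto (fun y => M * |log y - log x|) (nhdsWithin x s) (nhds 0) := by
    have := ((continuousAt_log (hs hx).ne').tendsto.sub_const (log x)).abs.const_mul M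
    simpa using this.mono_left nhdsWithin_le_nhds
  refine squeeze_zero_norm' (eventually_nhdsWithin_of_forall fun y hy => ?_) hlog
  simpa using hg y hy x hx

theorem integrableOn_Ioc (hg : LogLipschitzOn M g (Ioc 0 b)) : IntegrableOn g (Ioc 0 b) := by
  rcases le_or_gt b 0 with hb | hb
  · simp [Ioc_eq_empty_of_le hb]
  have hbound : IntervalIntegrable (fun u => |g b| + M * (log b - log u)) volume 0 b :=
    intervalIntegrable_const.add
      ((intervalIntegrable_const.sub intervalIntegral.intervalIntegrable_log').const_mul M)
  rw [intervalIntegrable_iff_integrableOn_Ioc_of_le hb.le] at hbound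
  refine hbound.mono'
    ((hg.continuousOn fun _ hu => hu.1).aestronglyMeasurable measurableSet_Ioc) ?_
  filter_upwards [ae_restrict_mem measurableSet_Ioc] with u hu
  calc ‖g u‖ ≤ |g b| + |g b - g u| := by
        rw [norm_eq_abs, abs_sub_comm]
        linarith [abs_sub_abs_le_abs_sub (g u) (g b)]
    _ ≤ |g b| + M * (log b - log u) := by
        grw [hg b ⟨hb, le_rfl⟩ u hu, abs_of_nonneg (sub_nonneg.2 (log_le_log hu.1 hu.2))]

theorem intervalIntegrable (hg : LogLipschitzOn M g (Ioc 0 b)) (ha : 0 ≤ a) (hab : a ≤ b) :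
    IntervalIntegrable g volume a b := by
  rw [intervalIntegrable_iff_integrableOn_Ioc_of_le hab]
  exact hg.integrableOn_Ioc.mono_set (Ioc_subset_Ioc_left ha)

theorem abs_sub_integral_le (hg : LogLipschitzOn M g (Ioc 0 b)) (ha : 0 ≤ a) (hab : a ≤ b) :
    |(b - a) * g b - ∫ u in a..b, g u| ≤ M * ∫ u in a..b, (log b - log u) := by
  have hsub : (b - a) * g b - ∫ u in a..b, g u = ∫ u in a..b, (g b - g u) := by
    rw [intervalIntegral.integral_sub intervalIntegrable_const (hg.intervalIntegrable ha hab),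
      intervalIntegral.integral_const, smul_eq_mul]
  rw [hsub, ← intervalIntegral.integral_const_mul, ← norm_eq_abs]
  refine intervalIntegral.norm_integral_le_of_norm_le hab (ae_of_all _ fun u hu => ?_)
    ((intervalIntegrable_const.sub intervalIntegral.intervalIntegrable_log').const_mul M)
  have hu0 : 0 < u := ha.trans_lt hu.1
  rw [norm_eq_abs, ← abs_of_nonneg (sub_nonneg.2 (log_le_log hu0 hu.2))]
  exact hg b ⟨hu0.trans_le hu.2, le_rfl⟩ u ⟨hu0, hu.2⟩

theorem abs_sum_sub_integral_le {m : ℕ} (hg : LogLipschitzOn M g (Ioc 0 m)) :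
    |∑ k ∈ Finset.Icc 1 m, g k - ∫ u in (0:ℝ)..m, g u|
      ≤ M * (∑ k ∈ Finset.Icc 1 m, log k - m * log m + m) := by
  induction m with
  | zero => simp
  | succ m ih =>
    have hm : (0:ℝ) ≤ m := m.cast_nonneg
    have hm1 : (m:ℝ) ≤ m + 1 := by linarith
    have hg' : LogLipschitzOn M g (Ioc 0 (m + 1)) := by exact_mod_cast hg
    have hgm : LogLipschitzOn M g (Ioc 0 m) := hg'.mono (Ioc_subset_Ioc_right hm1)
    have hstep := hg'.abs_sub_integral_le hm hm1
    have hlog :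
        ∫ u in (m:ℝ)..m + 1, (log (m + 1) - log u) = m * log m - m * log (m + 1) + 1 := by
      rw [intervalIntegral.integral_sub intervalIntegrable_const
        intervalIntegral.intervalIntegrable_log', intervalIntegral.integral_const, integral_log,
        smul_eq_mul]
      ring
    rw [hlog, add_sub_cancel_left, one_mul] at hstep
    rw [Finset.sum_Icc_succ_top (by omega), Finset.sum_Icc_succ_top (by omega), Nat.cast_succ,
      ← intervalIntegral.integral_add_adjacent_intervals (hgm.intervalIntegrable le_rfl hm)
        (hg'.intervalIntegrable hm hm1)]
    calc _ = |(∑ k ∈ Finset.Icc 1 m, g k - ∫ u in (0:ℝ)..m, g u)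
            + (g (m + 1) - ∫ u in (m:ℝ)..m + 1, g u)| := by ring_nf
      _ ≤ _ := abs_add_le _ _
      _ ≤ _ := add_le_add (ih hgm) hstep
      _ = _ := by ring

theorem comp_mul_left (hg : LogLipschitzOn M g (Ioc 0 (δ * b))) (hδ : 0 < δ) :
    LogLipschitzOn M (fun u => g (δ * u)) (Ioc 0 b) := by
  intro x hx y hy
  have hmem : ∀ z ∈ Ioc 0 b, δ * z ∈ Ioc 0 (δ * b) := fun z hz =>
    ⟨mul_pos hδ hz.1, mul_le_mul_of_nonneg_left hz.2 hδ.le⟩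
  have hlog : log (δ * x) - log (δ * y) = log x - log y := by
    rw [log_mul hδ.ne' hx.1.ne', log_mul hδ.ne' hy.1.ne']
    ring
  simpa only [hlog] using hg _ (hmem x hx) _ (hmem y hy)

theorem abs_sum_sub_integral_le_of_step {m : ℕ} (hg : LogLipschitzOn M g (Ioc 0 (δ * m)))
    (hδ : 0 < δ) :
    |∑ k ∈ Finset.Icc 1 m, g (δ * k) - δ⁻¹ * ∫ u in (0:ℝ)..δ * m, g u|
      ≤ M * (∑ k ∈ Finset.Icc 1 m, log k - m * log m + m) := by
  have := (hg.comp_mul_left hδ).abs_sum_sub_integral_le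
  rwa [intervalIntegral.integral_comp_mul_left _ hδ.ne', mul_zero, smul_eq_mul] at this

end LogLipschitzOn

section

variable {η ηs : ℝ → ℝ} {b c : ℝ}

theorem norm_div_self_le_of_abs_le (hmono : MonotoneOn ηs (Ioc 0 c))
    (hbound : ∀ s ∈ Ioc 0 c, |η s| ≤ ηs s) {u : ℝ} (hu : u ∈ Ioc 0 b) (hbc : b ≤ c) :
    ‖η u / u‖ ≤ ηs b * u⁻¹ := by
  have huc : u ∈ Ioc 0 c := ⟨hu.1, hu.2.trans hbc⟩
  rw [norm_div, norm_eq_abs, norm_of_nonneg hu.1.le, div_eq_mul_inv]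
  exact mul_le_mul_of_nonneg_right
    ((hbound u huc).trans (hmono huc ⟨hu.1.trans_le hu.2, hbc⟩ hu.2)) (inv_nonneg.2 hu.1.le)

theorem intervalIntegrable_div_self (hmono : MonotoneOn ηs (Ioc 0 c)) (hmeas : Measurable η)
    (hbound : ∀ s ∈ Ioc 0 c, |η s| ≤ ηs s) {x y : ℝ} (hx : x ∈ Ioc 0 c)
    (hy : y ∈ Ioc 0 c) : IntervalIntegrable (fun u => η u / u) volume x y := by
  have hsub : uIcc x y ⊆ Ioc 0 c := ordConnected_Ioc.uIcc_subset hx hy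
  refine IntervalIntegrable.mono_fun'
    ((intervalIntegral.intervalIntegrable_inv (fun u hu => (hsub hu).1.ne')
      continuousOn_id).const_mul (ηs c))
    (hmeas.div measurable_id).aestronglyMeasurable ?_
  filter_upwards [ae_restrict_mem measurableSet_uIoc] with u hu
  exact norm_div_self_le_of_abs_le hmono hbound (hsub (uIoc_subset_uIcc hu)) le_rfl

theorem logLipschitzOn_of_eq_neg_integral (hmono : MonotoneOn ηs (Ioc 0 c))
    (hmeas : Measurable η) (hbound : ∀ s ∈ Ioc 0 c, |η s| ≤ ηs s) {h : ℝ → ℝ}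
    (hh : ∀ x ∈ Ioc 0 c, h x = -∫ s in x..c, η s / s) (hbc : b ≤ c) :
    LogLipschitzOn (ηs b) h (Ioc 0 b) := by
  intro x hx y hy
  have hxc : x ∈ Ioc 0 c := ⟨hx.1, hx.2.trans hbc⟩
  have hyc : y ∈ Ioc 0 c := ⟨hy.1, hy.2.trans hbc⟩
  have hc : c ∈ Ioc 0 c := ⟨hx.1.trans_le hxc.2, le_rfl⟩
  have hdiff : h x - h y = ∫ u in y..x, η u / u := by
    rw [hh x hxc, hh y hyc, ← intervalIntegral.integral_symm, ← intervalIntegral.integral_symm,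
      intervalIntegral.integral_interval_sub_left
        (intervalIntegrable_div_self hmono hmeas hbound hc hxc)
        (intervalIntegrable_div_self hmono hmeas hbound hc hyc)]
  have hsub : uIcc y x ⊆ Ioc 0 b := ordConnected_Ioc.uIcc_subset hy hx
  have hηb : 0 ≤ ηs b := (abs_nonneg _).trans (hbound b ⟨hy.1.trans_le hy.2, hbc⟩)
  calc |h x - h y| = ‖∫ u in y..x, η u / u‖ := by rw [hdiff, norm_eq_abs]
    _ ≤ |∫ u in y..x, ηs b * u⁻¹| := by
        refine intervalIntegral.norm_integral_le_abs_of_norm_le ?_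
          ((intervalIntegral.intervalIntegrable_inv (fun u hu => (hsub hu).1.ne')
            continuousOn_id).const_mul (ηs b))
        filter_upwards [ae_restrict_mem measurableSet_uIoc] with u hu
        exact norm_div_self_le_of_abs_le hmono hbound (hsub (uIoc_subset_uIcc hu)) hbc
    _ = ηs b * |log x - log y| := by
        rw [intervalIntegral.integral_const_mul, integral_inv_of_pos hy.1 hx.1,
          log_div hx.1.ne' hy.1.ne', abs_mul, abs_of_nonneg hηb]

end

theorem riemann_sum_of_h_approximation_general
    (ηs η : ℝ → ℝ)
    (hmono : MonotoneOn ηs (Ioc 0 π))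
    (hmeas : Measurable η)
    (hbound : ∀ s ∈ Ioc (0:ℝ) π, |η s| ≤ ηs s)
    (h : ℝ → ℝ) (hh : ∀ x ∈ Ioc (0:ℝ) π, h x = -∫ s in x..π, η s / s)
    (n m : ℕ) (hmn : 4 * m ≤ n) :
    |(∑ k ∈ Finset.Icc 1 m, h (2 * π * k / n))
        - (n / (2 * π)) * ∫ s in (0:ℝ)..(2 * π * m / n), h s|
      ≤ ηs (2 * π * m / n) *
          ((∑ k ∈ Finset.Icc 1 m, Real.log k) - m * Real.log m + m) := by
  rcases m.eq_zero_or_pos with rfl | hm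
  · simp
  have hn : (0:ℝ) < n := by exact_mod_cast (by omega : 0 < n)
  have hδ : 0 < 2 * π / n := by positivity
  have hxm : 2 * π / n * m ≤ π := by
    rw [div_mul_eq_mul_div, div_le_iff₀ hn]
    have h2m : (2 * m : ℝ) ≤ n := by exact_mod_cast (by omega : 2 * m ≤ n)
    nlinarith [pi_pos]
  have hlip := logLipschitzOn_of_eq_neg_integral hmono hmeas hbound hh hxm
  simpa only [div_mul_eq_mul_div, inv_div] using hlip.abs_sum_sub_integral_le_of_step hδ

theorem riemann_sum_of_h_approximation
    (ηs η : ℝ → ℝ)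
    (hmono : MonotoneOn ηs (Ioc 0 π))
    (hlim : Filter.Tendsto ηs (nhdsWithin 0 (Ioi 0)) (nhds 0))
    (hmeas : Measurable η)
    (hbound : ∀ s ∈ Ioc (0:ℝ) π, |η s| ≤ ηs s)
    (h : ℝ → ℝ) (hh : ∀ x ∈ Ioc (0:ℝ) π, h x = -∫ s in x..π, η s / s)
    (n m : ℕ) (hm : 1 ≤ m) (hmn : 4 * m ≤ n) :
    |(∑ k ∈ Finset.Icc 1 m, h (2 * π * k / n))
        - (n / (2 * π)) * ∫ s in (0:ℝ)..(2 * π * m / n), h s|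
      ≤ ηs (2 * π * m / n) *
          ((∑ k ∈ Finset.Icc 1 m, Real.log k) - m * Real.log m + m) :=
  riemann_sum_of_h_approximation_general ηs η hmono hmeas hbound h hh n m hmn
end

section
/- Let η* be non-decreasing and slowly varying at 0 on (0,π] with η*(x) → 0, |η| ≤ η*, h(x) = -∫_x^π η(s)/s ds, h*(x) = ∫_x^π η*(s)/s ds, x_k = 2πk/n, and ν_{m,k} = log(k) - (1/m)Σ_{j=1}^m log(j). Then |Σ_{k=1}^m ν_{m,k} h(x_k)| ≤ m η*(x_m) + O(log²(m) η*(x_m) + log(m) h*(x_m)), uniformly over all η with |η| ≤ η*. -/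
/-!
Summation by parts, using `∑ₖ νₘ,ₖ = 0`, rewrites the sum as `∑_{j<m} Sⱼ (h(xⱼ) - h(xⱼ₊₁))` with
partial sums `Sⱼ = ∑_{i≤j} νₘ,ᵢ`. Comparing `∑_{i≤j} log i` with `j log j - j + 1` gives
`|Sⱼ| ≤ j (log m - log j) + 1 + log m`, while monotonicity of `η*` gives
`|h(xⱼ) - h(xⱼ₊₁)| ≤ η*(xₘ) log((j+1)/j) ≤ η*(xₘ)/j`. Summing, `∑_{j<m} (log m - log j) ≤ m - 1` and
the harmonic sum `≤ 1 + log m` leave `η*(xₘ) (m - 1 + (1 + log m)²)`.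
-/

set_option autoImplicit false

open Real MeasureTheory Set Filter

theorem sum_Icc_mul_eq_sum_Ico_partialSum_mul_sub {R : Type*} [CommRing R] (ν f : ℕ → R)
    (m : ℕ) :
    ∑ k ∈ Finset.Icc 1 m, ν k * f k
      = ∑ j ∈ Finset.Ico 1 m, (∑ i ∈ Finset.Icc 1 j, ν i) * (f j - f (j + 1))
        + (∑ i ∈ Finset.Icc 1 m, ν i) * f m := by
  induction m with
  | zero => simp
  | succ m ih =>
    rcases Nat.eq_zero_or_pos m with rfl | hm
    · simp
    rw [Finset.sum_Icc_succ_top (Nat.le_add_left 1 m), Finset.sum_Icc_succ_top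
      (Nat.le_add_left 1 m) ν, Finset.sum_Ico_succ_top hm, ih]
    ring

theorem abs_sum_mul_le_of_sum_eq_zero {R : Type*} [CommRing R] [LinearOrder R]
    [IsStrictOrderedRing R] {ν f A B : ℕ → R} {m : ℕ}
    (hν : ∑ i ∈ Finset.Icc 1 m, ν i = 0)
    (hA : ∀ j ∈ Finset.Ico 1 m, |∑ i ∈ Finset.Icc 1 j, ν i| ≤ A j)
    (hB : ∀ j ∈ Finset.Ico 1 m, |f j - f (j + 1)| ≤ B j) :
    |∑ k ∈ Finset.Icc 1 m, ν k * f k| ≤ ∑ j ∈ Finset.Ico 1 m, A j * B j := by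
  rw [sum_Icc_mul_eq_sum_Ico_partialSum_mul_sub, hν, zero_mul, add_zero]
  refine (Finset.abs_sum_le_sum_abs _ _).trans (Finset.sum_le_sum fun j hj => ?_)
  rw [abs_mul]
  exact mul_le_mul (hA j hj) (hB j hj) (abs_nonneg _) ((abs_nonneg _).trans (hA j hj))

theorem log_add_one_sub_log_le {x : ℝ} (hx : 0 < x) : log (x + 1) - log x ≤ x⁻¹ := by
  have := log_le_sub_one_of_pos (show 0 < (x + 1) / x by positivity)
  rwa [log_div (by positivity) hx.ne', add_div, div_self hx.ne', one_div, add_sub_cancel_left]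
    at this

theorem inv_add_one_le_log_add_one_sub_log {x : ℝ} (hx : 0 < x) :
    (x + 1)⁻¹ ≤ log (x + 1) - log x := by
  have := one_sub_inv_le_log_of_pos (show 0 < (x + 1) / x by positivity)
  rw [log_div (by positivity) hx.ne', inv_div] at this
  convert this using 1
  field_simp
  ring

theorem sum_log_Icc_ge {m : ℕ} (hm : 1 ≤ m) :
    m * log m - m + 1 ≤ ∑ i ∈ Finset.Icc 1 m, log i := by
  induction m, hm using Nat.le_induction with
  | base => simp
  | succ m hm ih =>
    have hm0 : (0 : ℝ) < m := by exact_mod_cast hm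
    have key := log_add_one_sub_log_le hm0
    rw [Finset.sum_Icc_succ_top (Nat.le_add_left 1 m)]
    push_cast
    have : (m : ℝ) * (log (m + 1) - log m) ≤ 1 := by
      calc _ ≤ (m : ℝ) * (m : ℝ)⁻¹ := by gcongr
        _ = 1 := mul_inv_cancel₀ hm0.ne'
    nlinarith

theorem sum_log_Icc_le {m : ℕ} (hm : 1 ≤ m) :
    ∑ i ∈ Finset.Icc 1 m, log i ≤ m * log m - m + 1 + log m := by
  induction m, hm using Nat.le_induction with
  | base => simp
  | succ m hm ih =>
    have hm0 : (0 : ℝ) < m := by exact_mod_cast hm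
    have key := inv_add_one_le_log_add_one_sub_log hm0
    rw [Finset.sum_Icc_succ_top (Nat.le_add_left 1 m)]
    push_cast
    have : 1 ≤ ((m : ℝ) + 1) * (log (m + 1) - log m) := by
      calc (1 : ℝ) = ((m : ℝ) + 1) * ((m : ℝ) + 1)⁻¹ := (mul_inv_cancel₀ (by positivity)).symm
        _ ≤ _ := by gcongr
    nlinarith

theorem sum_Icc_inv_le_one_add_log (m : ℕ) :
    ∑ i ∈ Finset.Icc 1 m, (i : ℝ)⁻¹ ≤ 1 + log m := by
  have := harmonic_le_one_add_log m
  simpa [harmonic_eq_sum_Icc] using this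

/-- The weight `νₘ,ₖ`. -/
noncomputable def logDeviation (m k : ℕ) : ℝ := log k - (1 / (m : ℝ)) * ∑ j ∈ Finset.Icc 1 m, log j

theorem sum_Icc_logDeviation (m j : ℕ) :
    ∑ i ∈ Finset.Icc 1 j, logDeviation m i
      = ∑ i ∈ Finset.Icc 1 j, log i - j / m * ∑ i ∈ Finset.Icc 1 m, log i := by
  simp only [logDeviation, Finset.sum_sub_distrib, Finset.sum_const, Nat.card_Icc,
    Nat.add_sub_cancel, nsmul_eq_mul]
  ring

theorem sum_logDeviation {m : ℕ} (hm : m ≠ 0) : ∑ k ∈ Finset.Icc 1 m, logDeviation m k = 0 := by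
  rw [sum_Icc_logDeviation, div_self (Nat.cast_ne_zero.mpr hm), one_mul, sub_self]

theorem abs_sum_logDeviation_le {m j : ℕ} (hj : 1 ≤ j) (hjm : j ≤ m) :
    |∑ i ∈ Finset.Icc 1 j, logDeviation m i| ≤ j * (log m - log j) + 1 + log m := by
  have hj0 : (0 : ℝ) < j := by exact_mod_cast hj
  have hjmR : (j : ℝ) ≤ m := by exact_mod_cast hjm
  have hm0 : (0 : ℝ) < m := hj0.trans_le hjmR
  have hlj : 0 ≤ log j := log_natCast_nonneg j
  have hljm : log j ≤ log m := log_le_log hj0 hjmR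
  set t : ℝ := j / m
  have ht1 : t ≤ 1 := (div_le_one hm0).mpr hjmR
  have ht0 : 0 ≤ t := by positivity
  have htm : t * m = j := div_mul_cancel₀ _ hm0.ne'
  have hL₁ := mul_le_mul_of_nonneg_left (sum_log_Icc_ge (hj.trans hjm)) ht0
  have hL₂ := mul_le_mul_of_nonneg_left (sum_log_Icc_le (hj.trans hjm)) ht0
  have htlm : t * log m ≤ log m := mul_le_of_le_one_left (hlj.trans hljm) ht1
  rw [sum_Icc_logDeviation, abs_le]
  constructor <;> nlinarith [sum_log_Icc_ge hj, sum_log_Icc_le hj]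

theorem sum_Ico_log_sub_log_le {m : ℕ} (hm : 1 ≤ m) :
    ∑ j ∈ Finset.Ico 1 m, (log m - log j) ≤ m - 1 := by
  have hlast : ∑ j ∈ Finset.Ico 1 m, (log m - log j) = ∑ j ∈ Finset.Icc 1 m, (log m - log j) := by
    rw [← Finset.Ico_add_one_right_eq_Icc, Finset.sum_Ico_succ_top hm, sub_self, add_zero]
  have hIcc : ∑ j ∈ Finset.Icc 1 m, (log m - log j) = m * log m - ∑ j ∈ Finset.Icc 1 m, log j := by
    simp [Finset.sum_sub_distrib]
  linarith [sum_log_Icc_ge hm]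

theorem sum_Ico_partialSumBound_mul_inv_le {m : ℕ} (hm : 1 ≤ m) {c : ℝ} (hc : 0 ≤ c) :
    ∑ j ∈ Finset.Ico 1 m, (j * (log m - log j) + 1 + log m) * (c * (j : ℝ)⁻¹)
      ≤ c * (m - 1) + c * (1 + log m) ^ 2 := by
  have hterm : ∀ j ∈ Finset.Ico 1 m, (j * (log m - log j) + 1 + log m) * (c * (j : ℝ)⁻¹)
      = c * (log m - log j) + c * (1 + log m) * (j : ℝ)⁻¹ := by
    intro j hj
    have : (j : ℝ) ≠ 0 := Nat.cast_ne_zero.mpr (Nat.one_le_iff_ne_zero.mp (Finset.mem_Ico.mp hj).1)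
    field_simp
    ring
  have hharm : ∑ j ∈ Finset.Ico 1 m, (j : ℝ)⁻¹ ≤ 1 + log m :=
    (Finset.sum_le_sum_of_subset_of_nonneg Finset.Ico_subset_Icc_self
      fun j _ _ => by positivity).trans (sum_Icc_inv_le_one_add_log m)
  rw [Finset.sum_congr rfl hterm, Finset.sum_add_distrib, ← Finset.mul_sum, ← Finset.mul_sum]
  have h1 : 0 ≤ c * (1 + log m) := mul_nonneg hc (by linarith [log_natCast_nonneg m])
  calc _ ≤ c * (m - 1) + c * (1 + log m) * (1 + log m) := by
        gcongr
        exact sum_Ico_log_sub_log_le hm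
    _ = _ := by ring

theorem one_add_log_sq_le (m : ℕ) : (1 + log m) ^ 2 ≤ 1 + 4 * log m ^ 2 := by
  rcases Nat.lt_or_ge m 2 with hm | hm
  · interval_cases m <;> simp
  have h2 : log 2 ≤ log m := log_le_log two_pos (by exact_mod_cast hm)
  nlinarith [log_two_gt_d9]

theorem freq_le_pi {n m : ℕ} (hmn : 2 * m ≤ n) : 2 * π * m / n ≤ π := by
  rcases n.eq_zero_or_pos with rfl | hn
  · simp [pi_pos.le]
  rw [div_le_iff₀ (by exact_mod_cast hn)]
  have : (2 * m : ℝ) ≤ n := by exact_mod_cast hmn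
  nlinarith [pi_pos]

theorem freq_mem_Ioc {n k : ℕ} (hk : 1 ≤ k) (hkn : 2 * k ≤ n) : 2 * π * k / n ∈ Ioc 0 π :=
  ⟨div_pos (mul_pos two_pi_pos (by exact_mod_cast hk)) (by exact_mod_cast (show 0 < n by omega)),
    freq_le_pi hkn⟩

theorem intervalIntegrable_const_mul_inv {a b : ℝ} (M : ℝ) (ha : 0 < a) (hab : a ≤ b) :
    IntervalIntegrable (fun s => M * s⁻¹) volume a b := by
  refine (intervalIntegral.intervalIntegrable_inv (fun s hs => ?_) continuousOn_id).const_mul M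
  rw [uIcc_of_le hab] at hs
  exact (ha.trans_le hs.1).ne'

section DivSelf

variable {η ηs : ℝ → ℝ} {a b M : ℝ}

theorem norm_div_self_le_of_abs_le_s14 (ha : 0 < a) (hM : ∀ s ∈ Ioc a b, |η s| ≤ M) {s : ℝ}
    (hs : s ∈ Ioc a b) : ‖η s / s‖ ≤ M * s⁻¹ := by
  have hs0 : 0 < s := ha.trans hs.1
  rw [norm_div, Real.norm_eq_abs, Real.norm_of_nonneg hs0.le, div_eq_mul_inv]
  exact mul_le_mul_of_nonneg_right (hM s hs) (inv_nonneg.mpr hs0.le)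

theorem intervalIntegrable_div_self_of_abs_le (hη : Measurable η) (ha : 0 < a) (hab : a ≤ b)
    (hM : ∀ s ∈ Ioc a b, |η s| ≤ M) : IntervalIntegrable (fun s => η s / s) volume a b := by
  refine (intervalIntegrable_const_mul_inv M ha hab).mono_fun'
    (hη.div measurable_id).aestronglyMeasurable ?_
  rw [uIoc_of_le hab]
  filter_upwards [ae_restrict_mem measurableSet_Ioc] with s hs
  exact norm_div_self_le_of_abs_le_s14 ha hM hs

theorem abs_integral_div_self_le (ha : 0 < a) (hab : a ≤ b) (hM : ∀ s ∈ Ioc a b, |η s| ≤ M) :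
    |∫ s in a..b, η s / s| ≤ M * log (b / a) := by
  rw [← Real.norm_eq_abs, ← integral_inv_of_pos ha (ha.trans_le hab),
    ← intervalIntegral.integral_const_mul]
  exact intervalIntegral.norm_integral_le_of_norm_le hab
    (ae_of_all _ fun s => norm_div_self_le_of_abs_le_s14 ha hM)
    (intervalIntegrable_const_mul_inv M ha hab)

theorem abs_sub_integral_div_self_le (hmono : MonotoneOn ηs (Ioc 0 π))
    (hη : Measurable η) (hle : ∀ s ∈ Ioc (0 : ℝ) π, |η s| ≤ ηs s) {c : ℝ} (ha : 0 < a)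
    (hab : a ≤ b) (hbc : b ≤ c) (hc : c ≤ π) :
    |(-∫ s in a..π, η s / s) - -∫ s in b..π, η s / s| ≤ ηs c * log (b / a) := by
  have hdom : ∀ {t}, t ≤ π → ∀ s ∈ Ioc 0 t, |η s| ≤ ηs t := fun ht s hs =>
    (hle s ⟨hs.1, hs.2.trans ht⟩).trans (hmono ⟨hs.1, hs.2.trans ht⟩ ⟨hs.1.trans_le hs.2, ht⟩ hs.2)
  have hb := ha.trans_le hab
  have hdom_ab : ∀ s ∈ Ioc a b, |η s| ≤ ηs c := fun s hs =>
    hdom hc s ⟨ha.trans hs.1, hs.2.trans hbc⟩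
  rw [← intervalIntegral.integral_add_adjacent_intervals
    (intervalIntegrable_div_self_of_abs_le hη ha hab hdom_ab)
    (intervalIntegrable_div_self_of_abs_le hη hb (hbc.trans hc) fun s hs =>
      hdom le_rfl s ⟨hb.trans hs.1, hs.2⟩),
    neg_add, add_sub_cancel_right, abs_neg]
  exact abs_integral_div_self_le ha hab hdom_ab

theorem abs_sub_integral_freq_le (hmono : MonotoneOn ηs (Ioc 0 π))
    (hη : Measurable η) (hle : ∀ s ∈ Ioc (0 : ℝ) π, |η s| ≤ ηs s) {n m j : ℕ} (hj : 1 ≤ j)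
    (hjm : j + 1 ≤ m) (hmn : 2 * m ≤ n) :
    |(-∫ s in (2 * π * j / n)..π, η s / s) - -∫ s in (2 * π * (j + 1 : ℕ) / n)..π, η s / s|
      ≤ ηs (2 * π * m / n) * (j : ℝ)⁻¹ := by
  have hj0 : (0 : ℝ) < j := by exact_mod_cast hj
  have hn0 : (n : ℝ) ≠ 0 := by exact_mod_cast (show n ≠ 0 by omega)
  have hratio : 2 * π * (j + 1 : ℕ) / n / (2 * π * j / n) = (j + 1) / j := by
    push_cast
    field_simp
  refine (abs_sub_integral_div_self_le hmono hη hle (freq_mem_Ioc hj (by omega)).1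
    (by gcongr; omega) (by gcongr) (freq_le_pi hmn)).trans ?_
  rw [hratio, log_div (by positivity) hj0.ne']
  exact mul_le_mul_of_nonneg_left (log_add_one_sub_log_le hj0)
    ((abs_nonneg _).trans (hle _ (freq_mem_Ioc (by omega) hmn)))
end DivSelf

theorem bias_bound_sum_nu_h_general
    (ηs : ℝ → ℝ)
    (hmono : MonotoneOn ηs (Ioc 0 π)) :
    ∃ C : ℝ,
      ∀ η : ℝ → ℝ, Measurable η → (∀ s ∈ Ioc (0:ℝ) π, |η s| ≤ ηs s) →
        ∀ n m : ℕ, 1 ≤ m → 2 * m ≤ n →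
          |∑ k ∈ Finset.Icc 1 m,
              (Real.log k - (1 / (m : ℝ)) * ∑ j ∈ Finset.Icc 1 m, Real.log j) *
                (-∫ s in (2 * π * k / n)..π, η s / s)|
            ≤ m * ηs (2 * π * m / n)
              + C * ((Real.log m) ^ 2 * ηs (2 * π * m / n)
                  + Real.log m * ∫ s in (2 * π * m / n)..π, ηs s / s) := by
  refine ⟨4, fun η hη hle n m hm hmn => ?_⟩
  have hxm := freq_mem_Ioc hm hmn
  have hc : 0 ≤ ηs (2 * π * m / n) := (abs_nonneg _).trans (hle _ hxm)
  have hI : 0 ≤ ∫ s in (2 * π * m / n)..π, ηs s / s :=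
    intervalIntegral.integral_nonneg hxm.2 fun s hs =>
      have hs0 := hxm.1.trans_le hs.1
      div_nonneg ((abs_nonneg _).trans (hle s ⟨hs0, hs.2⟩)) hs0.le
  have hsum := abs_sum_mul_le_of_sum_eq_zero (f := fun k => -∫ s in (2 * π * k / n)..π, η s / s)
    (sum_logDeviation (m := m) (by omega))
    (fun j hj => abs_sum_logDeviation_le (Finset.mem_Ico.mp hj).1 (Finset.mem_Ico.mp hj).2.le)
    (fun j hj => abs_sub_integral_freq_le hmono hη hle (Finset.mem_Ico.mp hj).1
      (Finset.mem_Ico.mp hj).2 hmn)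
  calc _ ≤ ηs (2 * π * m / n) * (m - 1) + ηs (2 * π * m / n) * (1 + log m) ^ 2 :=
        hsum.trans (sum_Ico_partialSumBound_mul_inv_le hm hc)
    _ ≤ ηs (2 * π * m / n) * (m - 1) + ηs (2 * π * m / n) * (1 + 4 * log m ^ 2) := by
        gcongr
        exact one_add_log_sq_le m
    _ ≤ _ := by nlinarith [mul_nonneg (log_natCast_nonneg m) hI]

theorem bias_bound_sum_nu_h
    (ηs : ℝ → ℝ)
    (hmono : MonotoneOn ηs (Ioc 0 π))
    (hslow : ∀ t > (0:ℝ),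
      Tendsto (fun x => ηs (t * x) / ηs x) (nhdsWithin 0 (Ioi 0)) (nhds 1))
    (hlim : Tendsto ηs (nhdsWithin 0 (Ioi 0)) (nhds 0)) :
    ∃ C : ℝ,
      ∀ η : ℝ → ℝ, Measurable η → (∀ s ∈ Ioc (0:ℝ) π, |η s| ≤ ηs s) →
        ∀ n m : ℕ, 1 ≤ m → 2 * m ≤ n →
          |∑ k ∈ Finset.Icc 1 m,
              (Real.log k - (1 / (m : ℝ)) * ∑ j ∈ Finset.Icc 1 m, Real.log j) *
                (-∫ s in (2 * π * k / n)..π, η s / s)|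
            ≤ m * ηs (2 * π * m / n)
              + C * ((Real.log m) ^ 2 * ηs (2 * π * m / n)
                  + Real.log m * ∫ s in (2 * π * m / n)..π, ηs s / s) :=
  bias_bound_sum_nu_h_general ηs hmono
end
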